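/- arXiv:math/0512209 — 2 statements merged into one kernel-verified Lean document; each statement's English description precedes it below -/
import Mathlib

section
/- Let M be a module over the twisted Heisenberg-Virasoro algebra and v ∈ M with I_1·v = 0 and L_1·v = 0. Then I_k·(L_2·v) = 0 for all integers k ≥ 1. -/
/-- A representation of the twisted Heisenberg–Virasoro algebra on a ℂ-vector
space `M`: operators `L n`, `I n`, `C`, `CI`, `CLI` satisfying the defining
commutation relations (brackets of endomorphisms are ring commutators). -/
structure HVRep (M : Type) [AddCommGroup M] [Module ℂ M] where
  L : ℤ → Module.End ℂ M
  I : ℤ → Module.End ℂ M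
  C : Module.End ℂ M
  CI : Module.End ℂ M
  CLI : Module.End ℂ M
  comm_LL : ∀ n m : ℤ, L n * L m - L m * L n =
    (m - n : ℂ) • L (n + m) +
      (if n = -m then (((n : ℂ) ^ 3 - (n : ℂ)) / 12) else 0) • C
  comm_LI : ∀ n m : ℤ, L n * I m - I m * L n =
    (m : ℂ) • I (n + m) +
      (if n = -m then ((n : ℂ) ^ 2 + (n : ℂ)) else 0) • CLI
  comm_II : ∀ n m : ℤ, I n * I m - I m * I n =
    (if n = -m then (n : ℂ) else 0) • CI
  central_C_L : ∀ n : ℤ, L n * C = C * L n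
  central_C_I : ∀ n : ℤ, I n * C = C * I n
  central_CI_L : ∀ n : ℤ, L n * CI = CI * L n
  central_CI_I : ∀ n : ℤ, I n * CI = CI * I n
  central_CLI_L : ∀ n : ℤ, L n * CLI = CLI * L n
  central_CLI_I : ∀ n : ℤ, I n * CLI = CLI * I n
  central_C_CI : C * CI = CI * C
  central_C_CLI : C * CLI = CLI * C
  central_CI_CLI : CI * CLI = CLI * CI

namespace HVRep

variable {M : Type} [AddCommGroup M] [Module ℂ M] (ρ : HVRep M)

theorem I_L_apply {n m : ℤ} (h : n ≠ -m) (w : M) :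
    ρ.I m (ρ.L n w) = ρ.L n (ρ.I m w) - (m : ℂ) • ρ.I (n + m) w := by
  have hw := LinearMap.congr_fun (ρ.comm_LI n m) w
  rw [if_neg h, zero_smul, add_zero] at hw
  simp only [LinearMap.sub_apply, Module.End.mul_apply, LinearMap.smul_apply] at hw
  rw [← hw, sub_sub_cancel]

theorem I_apply_eq_zero_of_one_le {v : M} (h1 : ρ.I 1 v = 0) (h2 : ρ.L 1 v = 0) {k : ℤ}
    (hk : 1 ≤ k) : ρ.I k v = 0 := by
  induction k, hk using Int.leInduction with
  | base => exact h1
  | succ k _ ih =>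
    have hrel := ρ.I_L_apply (n := 1) (m := k) (by omega) v
    rw [h2, map_zero, ih, map_zero, zero_sub, eq_comm, neg_eq_zero, add_comm] at hrel
    exact (smul_eq_zero.mp hrel).resolve_left (by exact_mod_cast (by omega : k ≠ 0))

end HVRep

/-- If I₁·v = 0 and L₁·v = 0 then Iₖ·(L₂·v) = 0 for all k ≥ 1. -/
theorem hv_Ik_L2v_eq_zero {M : Type} [AddCommGroup M] [Module ℂ M]
    (ρ : HVRep M) (v : M) (h1 : ρ.I 1 v = 0) (h2 : ρ.L 1 v = 0) :
    ∀ k : ℤ, 1 ≤ k → ρ.I k (ρ.L 2 v) = 0 := by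
  intro k hk
  rw [ρ.I_L_apply (by omega), ρ.I_apply_eq_zero_of_one_le h1 h2 hk,
    ρ.I_apply_eq_zero_of_one_le h1 h2 (by omega : 1 ≤ 2 + k), map_zero, smul_zero, sub_zero]
end

section
/- Let M be a module over the twisted Heisenberg-Virasoro algebra on which C_LI acts by a scalar c_LI. Suppose w ∈ M is nonzero, I_k·w = 0 for all k ∈ ℤ, and (L_1³ - 6 L_2 L_1 + 6 L_3)·w = 0. Then c_LI = 0. -/
lemma hv_key {M : Type} [AddCommGroup M] [Module ℂ M] (ρ : HVRep M) (n m : ℤ) (v : M) :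
    ρ.I m (ρ.L n v) = ρ.L n (ρ.I m v) - (m : ℂ) • ρ.I (n + m) v -
      (if n = -m then ((n : ℂ) ^ 2 + (n : ℂ)) else 0) • ρ.CLI v := by
  have h := congrArg (fun f : Module.End ℂ M => f v) (ρ.comm_LI n m)
  simp only [LinearMap.sub_apply, LinearMap.add_apply, LinearMap.smul_apply,
    Module.End.mul_apply] at h
  linear_combination (norm := module) -h

/-- If C_LI acts as the scalar c_LI, w ≠ 0, Iₖ·w = 0 for all k ∈ ℤ, and
(L₁³ - 6·L₂L₁ + 6·L₃)·w = 0, then c_LI = 0. -/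
theorem hv_cLI_eq_zero {M : Type} [AddCommGroup M] [Module ℂ M]
    (ρ : HVRep M) (cLI : ℂ) (hscal : ρ.CLI = cLI • (1 : Module.End ℂ M))
    (w : M) (hw : w ≠ 0) (hI : ∀ k : ℤ, ρ.I k w = 0)
    (h : (ρ.L 1 ^ 3 - (6 : ℂ) • (ρ.L 2 * ρ.L 1) + (6 : ℂ) • ρ.L 3) w = 0) :
    cLI = 0 := by
  have hC : ∀ v : M, ρ.CLI v = cLI • v := by
    intro v; rw [hscal]; simp
  -- h expanded
  have hX : ρ.L 1 (ρ.L 1 (ρ.L 1 w)) - (6:ℂ) • ρ.L 2 (ρ.L 1 w) + (6:ℂ) • ρ.L 3 w = 0 := by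
    simpa only [LinearMap.add_apply, LinearMap.sub_apply, LinearMap.smul_apply,
      Module.End.mul_apply, pow_succ, pow_zero, one_mul] using h
  have h1 : ρ.I (-1) (ρ.L 1 w) = (-(2 * cLI)) • w := by
    rw [hv_key]; simp [hI, hC, smul_smul]; ring_nf
  have h2 : ρ.I (-1) (ρ.L 1 (ρ.L 1 w)) = (-(4 * cLI)) • ρ.L 1 w := by
    rw [hv_key]
    have h0 : ρ.I 0 (ρ.L 1 w) = 0 := by
      rw [hv_key]; simp [hI]
    simp [h0, h1, hC, smul_smul]
    module
  have h3 : ρ.I (-1) (ρ.L 1 (ρ.L 1 (ρ.L 1 w))) = (-(6 * cLI)) • ρ.L 1 (ρ.L 1 w) := by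
    rw [hv_key]
    have h0 : ρ.I 0 (ρ.L 1 w) = 0 := by
      rw [hv_key]; simp [hI]
    have h0' : ρ.I 0 (ρ.L 1 (ρ.L 1 w)) = 0 := by
      rw [hv_key]; simp [h0, hI]
    simp [h0', h2, hC, smul_smul]
    module
  have h4 : ρ.I (-1) (ρ.L 2 (ρ.L 1 w)) = (-(2 * cLI)) • ρ.L 2 w := by
    rw [hv_key]
    have h1' : ρ.I 1 (ρ.L 1 w) = 0 := by
      rw [hv_key]; simp [hI]
    simp [h1, h1', hC, smul_smul]
  have h5 : ρ.I (-1) (ρ.L 3 w) = 0 := by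
    rw [hv_key]; simp [hI]
  have h6 : ρ.I (-1) (ρ.L 2 w) = 0 := by
    rw [hv_key]; simp [hI]
  -- apply I(-1) three times to hX
  have e1 := congrArg (ρ.I (-1)) hX
  simp only [map_add, map_sub, map_smul, map_zero, h3, h4, h5] at e1
  have e2 := congrArg (ρ.I (-1)) e1
  simp only [map_add, map_sub, map_smul, map_zero, h2, h6] at e2
  have e3 := congrArg (ρ.I (-1)) e2
  simp only [map_add, map_sub, map_smul, map_zero, h1] at e3
  have efin : (-(6*cLI)) • ((-(4*cLI)) • ((-(2*cLI)) • w)) = 0 := by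
    simpa using e3
  rw [smul_smul, smul_smul, smul_eq_zero] at efin
  rcases efin with hc | hc
  · have : cLI ^ 3 = 0 := by linear_combination (-1/48 : ℂ) * hc
    exact pow_eq_zero_iff (by norm_num) |>.mp this
  · exact absurd hc hw
end
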